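/- Suppose Φ_g ∈ M is a ground state with radially symmetric potential and E_soc(Φ_g) = 0. Then for every θ ∈ (0,2π), the rotated function Φ^θ(x) = Φ_g(R(θ)x) is also a ground state. Conversely, if E_soc(Φ_g) < 0, then for every θ ∈ (0,2π), E(Φ^θ) > E(Φ_g), so Φ^θ is not a ground state. -/

import Mathlib

open MeasureTheory Complex

noncomputable section

abbrev Pt (d : ℕ) := EuclideanSpace ℝ (Fin d)

/-- Classical partial derivative `∂_j f`, junk `0` if `j ≥ d`. -/
def pdC (d : ℕ) (f : Pt d → ℂ) (j : ℕ) (x : Pt d) : ℂ :=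
  if h : j < d then fderiv ℝ f x (EuclideanSpace.single ⟨j, h⟩ 1) else 0

def nthC (d : ℕ) (x : Pt d) (j : ℕ) : ℝ := if h : j < d then x ⟨j, h⟩ else 0

/-- `L₀ = i∂ₓ + ∂_y`. -/
def L0op (d : ℕ) (f : Pt d → ℂ) (x : Pt d) : ℂ := Complex.I * pdC d f 0 x + pdC d f 1 x

/-- `L₁ = i∂ₓ − ∂_y`. -/
def L1op (d : ℕ) (f : Pt d → ℂ) (x : Pt d) : ℂ := Complex.I * pdC d f 0 x - pdC d f 1 x

/-- Rotation operator `L_z = −i(x∂_y − y∂ₓ)`. -/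
def Lzop (d : ℕ) (f : Pt d → ℂ) (x : Pt d) : ℂ :=
  -Complex.I * (((nthC d x 0 : ℝ) : ℂ) * pdC d f 1 x - ((nthC d x 1 : ℝ) : ℂ) * pdC d f 0 x)

/-- `|∇f|²`. -/
def gradsq (d : ℕ) (f : Pt d → ℂ) (x : Pt d) : ℝ := ∑ j : Fin d, ‖pdC d f j x‖ ^ 2

/-- Total density `ρ = |φ₁|² + |φ₀|² + |φ₋₁|²`. -/
def rho (d : ℕ) (φ1 φ0 φm1 : Pt d → ℂ) (x : Pt d) : ℝ :=
  ‖φ1 x‖ ^ 2 + ‖φ0 x‖ ^ 2 + ‖φm1 x‖ ^ 2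

/-- Spin vector magnitude squared `|F|²`. -/
def Fsq (d : ℕ) (φ1 φ0 φm1 : Pt d → ℂ) (x : Pt d) : ℝ :=
  2 * ((((starRingEnd ℂ) (φ1 x) + (starRingEnd ℂ) (φm1 x)) * φ0 x).re) ^ 2
    + 2 * ((φ0 x * ((starRingEnd ℂ) (φm1 x) - (starRingEnd ℂ) (φ1 x))).im) ^ 2
    + (‖φ1 x‖ ^ 2 - ‖φm1 x‖ ^ 2) ^ 2

/-- The (real) SOC integrand `Φ†SΦ = φ̄₁L₀φ₀ + φ̄₀(L₀φ₋₁ + L₁φ₁) + φ̄₋₁L₁φ₀`. -/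
def socDen (d : ℕ) (φ1 φ0 φm1 : Pt d → ℂ) (x : Pt d) : ℝ :=
  ((starRingEnd ℂ) (φ1 x) * L0op d φ0 x
    + (starRingEnd ℂ) (φ0 x) * (L0op d φm1 x + L1op d φ1 x)
    + (starRingEnd ℂ) (φm1 x) * L1op d φ0 x).re

/-- The (real) rotation integrand `φ̄ L_z φ`. -/
def rotDen (d : ℕ) (φ : Pt d → ℂ) (x : Pt d) : ℝ :=
  ((starRingEnd ℂ) (φ x) * Lzop d φ x).re

/-- Kinetic energy. -/
def Ekin (d : ℕ) (φ1 φ0 φm1 : Pt d → ℂ) : ℝ :=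
  (1 / 2 : ℝ) * ∫ x, (gradsq d φ1 x + gradsq d φ0 x + gradsq d φm1 x)

/-- Potential energy. -/
def Epot (d : ℕ) (V : Pt d → ℝ) (φ1 φ0 φm1 : Pt d → ℂ) : ℝ :=
  ∫ x, V x * rho d φ1 φ0 φm1 x

/-- Interaction (spin) energy. -/
def Espin (d : ℕ) (c0 c1 : ℝ) (φ1 φ0 φm1 : Pt d → ℂ) : ℝ :=
  ∫ x, (c0 / 2 * (rho d φ1 φ0 φm1 x) ^ 2 + c1 / 2 * Fsq d φ1 φ0 φm1 x)

/-- Rotation energy. -/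
def Erot (d : ℕ) (Ω : ℝ) (φ1 φ0 φm1 : Pt d → ℂ) : ℝ :=
  -Ω * ∫ x, (rotDen d φ1 x + rotDen d φ0 x + rotDen d φm1 x)

/-- Spin-orbit coupling energy. -/
def Esoc (d : ℕ) (γ : ℝ) (φ1 φ0 φm1 : Pt d → ℂ) : ℝ :=
  -γ * ∫ x, socDen d φ1 φ0 φm1 x

/-- Total energy of the rotating SOC spin-1 BEC. -/
def Etot (d : ℕ) (V : Pt d → ℝ) (c0 c1 Ω γ : ℝ) (φ1 φ0 φm1 : Pt d → ℂ) : ℝ :=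
  Ekin d φ1 φ0 φm1 + Epot d V φ1 φ0 φm1 + Espin d c0 c1 φ1 φ0 φm1
    + Erot d Ω φ1 φ0 φm1 + Esoc d γ φ1 φ0 φm1

/-- The constraint manifold `M`: triples in `H¹ ∩ L²_V` (with all energy integrands
integrable) of unit total mass. -/
def InM (d : ℕ) (V : Pt d → ℝ) (φ1 φ0 φm1 : Pt d → ℂ) : Prop :=
  Differentiable ℝ φ1 ∧ Differentiable ℝ φ0 ∧ Differentiable ℝ φm1 ∧
  Integrable (fun x => rho d φ1 φ0 φm1 x) ∧
  Integrable (fun x => gradsq d φ1 x + gradsq d φ0 x + gradsq d φm1 x) ∧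
  Integrable (fun x => V x * rho d φ1 φ0 φm1 x) ∧
  Integrable (fun x => (rho d φ1 φ0 φm1 x) ^ 2) ∧
  Integrable (fun x => Fsq d φ1 φ0 φm1 x) ∧
  Integrable (fun x => rotDen d φ1 x + rotDen d φ0 x + rotDen d φm1 x) ∧
  Integrable (fun x => socDen d φ1 φ0 φm1 x) ∧
  (∫ x, rho d φ1 φ0 φm1 x) = 1

/-- Rotation of `ℝ^d` by angle `θ` about the `z`-axis (planar rotation in the
first two coordinates). -/
def RotPt (d : ℕ) (θ : ℝ) (x : Pt d) : Pt d :=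
  (WithLp.equiv 2 (∀ _ : Fin d, ℝ)).symm fun j =>
    if (j : ℕ) = 0 then Real.cos θ * nthC d x 0 - Real.sin θ * nthC d x 1
    else if (j : ℕ) = 1 then Real.sin θ * nthC d x 0 + Real.cos θ * nthC d x 1
    else x j

/-!
The rotation `R(θ)` is a linear isometry of `ℝ^d`, so it preserves Lebesgue measure, the
radial potential and the pointwise densities of the kinetic, potential, interaction and
rotation energies. The spin-orbit operators only pick up phases,
`L₀(Φ ∘ R) = e^{iθ} (L₀Φ) ∘ R` and `L₁(Φ ∘ R) = e^{-iθ} (L₁Φ) ∘ R`, so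
`E(Φ^θ) = E(Φ_g) + (cos θ - 1) E_soc(Φ_g) + T sin θ` for a real constant `T`.
Minimality of `Φ_g` makes the right-hand side minimal at `θ = 0`, so its derivative `T`
there vanishes; the theorem then follows from `cos θ < 1` on `(0, 2π)`.
-/

lemma Fintype.sum_eq_sum_of_pair {ι M : Type*} [Fintype ι] [DecidableEq ι] [AddCommMonoid M]
    {f g : ι → M} {i j : ι} (hij : i ≠ j) (hpair : f i + f j = g i + g j)
    (hoff : ∀ k, k ≠ i → k ≠ j → f k = g k) : ∑ k, f k = ∑ k, g k := by
  rw [← Finset.sum_compl_add_sum {i, j} f, ← Finset.sum_compl_add_sum {i, j} g,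
    Finset.sum_pair hij, Finset.sum_pair hij, hpair]
  congr 1
  refine Finset.sum_congr rfl fun k hk => ?_
  simp only [Finset.mem_compl, Finset.mem_insert, Finset.mem_singleton, not_or] at hk
  exact hoff k hk.1 hk.2

section Rotation

variable {d : ℕ}

lemma nthC_add (x y : Pt d) (j : ℕ) : nthC d (x + y) j = nthC d x j + nthC d y j := by
  unfold nthC; split <;> simp

lemma nthC_smul (c : ℝ) (x : Pt d) (j : ℕ) : nthC d (c • x) j = c * nthC d x j := by
  unfold nthC; split <;> simp

lemma RotPt_apply (θ : ℝ) (x : Pt d) (j : Fin d) :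
    RotPt d θ x j = if (j : ℕ) = 0 then Real.cos θ * nthC d x 0 - Real.sin θ * nthC d x 1
      else if (j : ℕ) = 1 then Real.sin θ * nthC d x 0 + Real.cos θ * nthC d x 1
      else x j := rfl

lemma nthC_RotPt_zero (hd : 2 ≤ d) (θ : ℝ) (x : Pt d) :
    nthC d (RotPt d θ x) 0 = Real.cos θ * nthC d x 0 - Real.sin θ * nthC d x 1 := by
  simp [nthC, show 0 < d by omega, RotPt_apply]

lemma nthC_RotPt_one (hd : 2 ≤ d) (θ : ℝ) (x : Pt d) :
    nthC d (RotPt d θ x) 1 = Real.sin θ * nthC d x 0 + Real.cos θ * nthC d x 1 := by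
  simp [nthC, show 1 < d by omega, RotPt_apply]

lemma norm_RotPt (hd : 2 ≤ d) (θ : ℝ) (x : Pt d) : ‖RotPt d θ x‖ = ‖x‖ := by
  have h0 : 0 < d := by omega
  have h1 : 1 < d := by omega
  refine (sq_eq_sq₀ (norm_nonneg _) (norm_nonneg _)).1 ?_
  rw [EuclideanSpace.real_norm_sq_eq, EuclideanSpace.real_norm_sq_eq]
  refine Fintype.sum_eq_sum_of_pair (i := ⟨0, h0⟩) (j := ⟨1, h1⟩) (by simp) ?_ ?_
  · simp only [RotPt_apply, ↓reduceIte, nthC, h0, ↓reduceDIte, h1, one_ne_zero]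
    linear_combination (Real.sin_sq_add_cos_sq θ) * (x ⟨0, h0⟩ ^ 2 + x ⟨1, h1⟩ ^ 2)
  · intro k hk0 hk1
    rw [RotPt_apply, if_neg (fun h => hk0 (Fin.ext h)), if_neg (fun h => hk1 (Fin.ext h))]

def rotLIE (hd : 2 ≤ d) (θ : ℝ) : Pt d ≃ₗᵢ[ℝ] Pt d :=
  LinearIsometry.toLinearIsometryEquiv
    { toFun := RotPt d θ
      map_add' := fun x y => by
        ext j; simp only [RotPt_apply, PiLp.add_apply, nthC_add]; split_ifs <;> ring
      map_smul' := fun c x => by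
        ext j; simp only [RotPt_apply, PiLp.smul_apply, nthC_smul, smul_eq_mul, RingHom.id_apply]
        split_ifs <;> ring
      norm_map' := norm_RotPt hd θ } rfl

@[simp] lemma coe_rotLIE (hd : 2 ≤ d) (θ : ℝ) : ⇑(rotLIE hd θ) = RotPt d θ := rfl

end Rotation

section Derivatives

variable {d : ℕ}

lemma fderiv_comp_RotPt (hd : 2 ≤ d) (θ : ℝ) (f : Pt d → ℂ) (x v : Pt d) :
    fderiv ℝ (f ∘ RotPt d θ) x v = fderiv ℝ f (RotPt d θ x) (RotPt d θ v) := by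
  rw [← coe_rotLIE hd θ]
  exact congrArg (· v) ((rotLIE hd θ).toContinuousLinearEquiv.comp_right_fderiv (f := f))

lemma RotPt_single_zero (hd : 2 ≤ d) (θ : ℝ) :
    RotPt d θ (EuclideanSpace.single ⟨0, by omega⟩ 1)
      = Real.cos θ • EuclideanSpace.single ⟨0, by omega⟩ 1
        + Real.sin θ • EuclideanSpace.single ⟨1, by omega⟩ 1 := by
  ext j
  simp only [RotPt_apply, nthC, dif_pos (show 0 < d by omega), dif_pos (show 1 < d by omega),
    PiLp.add_apply, PiLp.smul_apply, PiLp.single_apply, Fin.ext_iff, smul_eq_mul]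
  split_ifs <;> simp_all

lemma RotPt_single_one (hd : 2 ≤ d) (θ : ℝ) :
    RotPt d θ (EuclideanSpace.single ⟨1, by omega⟩ 1)
      = (-Real.sin θ) • EuclideanSpace.single ⟨0, by omega⟩ 1
        + Real.cos θ • EuclideanSpace.single ⟨1, by omega⟩ 1 := by
  ext j
  simp only [RotPt_apply, nthC, dif_pos (show 0 < d by omega), dif_pos (show 1 < d by omega),
    PiLp.add_apply, PiLp.smul_apply, PiLp.single_apply, Fin.ext_iff, smul_eq_mul]
  split_ifs <;> simp_all

lemma RotPt_single_of_two_le (θ : ℝ) (i : Fin d) (hi : 2 ≤ (i : ℕ)) :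
    RotPt d θ (EuclideanSpace.single i 1) = EuclideanSpace.single i 1 := by
  ext j
  simp only [RotPt_apply, nthC, PiLp.single_apply, Fin.ext_iff]
  split_ifs <;> simp_all <;> omega

lemma pdC_comp_RotPt_zero (hd : 2 ≤ d) (θ : ℝ) (f : Pt d → ℂ) (x : Pt d) :
    pdC d (f ∘ RotPt d θ) 0 x
      = Real.cos θ * pdC d f 0 (RotPt d θ x) + Real.sin θ * pdC d f 1 (RotPt d θ x) := by
  simp [pdC, show 0 < d by omega, show 1 < d by omega, fderiv_comp_RotPt hd,
    RotPt_single_zero hd, Complex.real_smul]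

lemma pdC_comp_RotPt_one (hd : 2 ≤ d) (θ : ℝ) (f : Pt d → ℂ) (x : Pt d) :
    pdC d (f ∘ RotPt d θ) 1 x
      = -Real.sin θ * pdC d f 0 (RotPt d θ x) + Real.cos θ * pdC d f 1 (RotPt d θ x) := by
  simp [pdC, show 0 < d by omega, show 1 < d by omega, fderiv_comp_RotPt hd,
    RotPt_single_one hd, Complex.real_smul]

lemma pdC_comp_RotPt_of_two_le (hd : 2 ≤ d) (θ : ℝ) (f : Pt d → ℂ) (x : Pt d) {j : ℕ}
    (hj : 2 ≤ j) : pdC d (f ∘ RotPt d θ) j x = pdC d f j (RotPt d θ x) := by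
  unfold pdC
  split_ifs with h
  · rw [fderiv_comp_RotPt hd, RotPt_single_of_two_le θ ⟨j, h⟩ hj]
  · rfl

end Derivatives

section Densities

variable {d : ℕ}

lemma L0op_comp_RotPt (hd : 2 ≤ d) (θ : ℝ) (f : Pt d → ℂ) (x : Pt d) :
    L0op d (f ∘ RotPt d θ) x = (Real.cos θ + Real.sin θ * I) * L0op d f (RotPt d θ x) := by
  rw [L0op, L0op, pdC_comp_RotPt_zero hd, pdC_comp_RotPt_one hd]
  linear_combination (-(Real.sin θ : ℂ) * pdC d f 0 (RotPt d θ x)) * I_sq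

lemma L1op_comp_RotPt (hd : 2 ≤ d) (θ : ℝ) (f : Pt d → ℂ) (x : Pt d) :
    L1op d (f ∘ RotPt d θ) x = (Real.cos θ - Real.sin θ * I) * L1op d f (RotPt d θ x) := by
  rw [L1op, L1op, pdC_comp_RotPt_zero hd, pdC_comp_RotPt_one hd]
  linear_combination ((Real.sin θ : ℂ) * pdC d f 0 (RotPt d θ x)) * I_sq

lemma Lzop_comp_RotPt (hd : 2 ≤ d) (θ : ℝ) (f : Pt d → ℂ) (x : Pt d) :
    Lzop d (f ∘ RotPt d θ) x = Lzop d f (RotPt d θ x) := by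
  rw [Lzop, Lzop, pdC_comp_RotPt_zero hd, pdC_comp_RotPt_one hd, nthC_RotPt_zero hd,
    nthC_RotPt_one hd]
  push_cast
  ring

lemma rotDen_comp_RotPt (hd : 2 ≤ d) (θ : ℝ) (f : Pt d → ℂ) (x : Pt d) :
    rotDen d (f ∘ RotPt d θ) x = rotDen d f (RotPt d θ x) := by
  rw [rotDen, rotDen, Lzop_comp_RotPt hd]
  rfl

lemma norm_sq_add_norm_sq_of_rotate (c s : ℝ) (h : s ^ 2 + c ^ 2 = 1) (a b : ℂ) :
    ‖c * a + s * b‖ ^ 2 + ‖-s * a + c * b‖ ^ 2 = ‖a‖ ^ 2 + ‖b‖ ^ 2 := by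
  simp only [Complex.sq_norm, normSq_apply, add_re, add_im, mul_re, mul_im, neg_re, neg_im,
    ofReal_re, ofReal_im]
  linear_combination h * (a.re ^ 2 + a.im ^ 2 + b.re ^ 2 + b.im ^ 2)

lemma gradsq_comp_RotPt (hd : 2 ≤ d) (θ : ℝ) (f : Pt d → ℂ) (x : Pt d) :
    gradsq d (f ∘ RotPt d θ) x = gradsq d f (RotPt d θ x) := by
  refine Fintype.sum_eq_sum_of_pair (i := ⟨0, by omega⟩) (j := ⟨1, by omega⟩) (by simp) ?_ ?_
  · rw [pdC_comp_RotPt_zero hd, pdC_comp_RotPt_one hd]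
    exact norm_sq_add_norm_sq_of_rotate _ _ (Real.sin_sq_add_cos_sq θ) _ _
  · intro k hk0 hk1
    rw [pdC_comp_RotPt_of_two_le hd]
    have : (k : ℕ) ≠ 0 := fun h => hk0 (Fin.ext h)
    have : (k : ℕ) ≠ 1 := fun h => hk1 (Fin.ext h)
    omega

def socDenIm (d : ℕ) (φ1 φ0 φm1 : Pt d → ℂ) (x : Pt d) : ℝ :=
  ((starRingEnd ℂ) (φ1 x) * L0op d φ0 x + (starRingEnd ℂ) (φ0 x) * L0op d φm1 x
    - (starRingEnd ℂ) (φ0 x) * L1op d φ1 x - (starRingEnd ℂ) (φm1 x) * L1op d φ0 x).im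

lemma socDen_comp_RotPt (hd : 2 ≤ d) (θ : ℝ) (φ1 φ0 φm1 : Pt d → ℂ) (x : Pt d) :
    socDen d (φ1 ∘ RotPt d θ) (φ0 ∘ RotPt d θ) (φm1 ∘ RotPt d θ) x
      = Real.cos θ * socDen d φ1 φ0 φm1 (RotPt d θ x)
        - Real.sin θ * socDenIm d φ1 φ0 φm1 (RotPt d θ x) := by
  rw [socDen, socDen, socDenIm, L0op_comp_RotPt hd, L0op_comp_RotPt hd, L1op_comp_RotPt hd,
    L1op_comp_RotPt hd]
  simp only [Function.comp_apply, add_re, mul_re, mul_im, add_im, sub_re, sub_im, I_re, I_im,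
    ofReal_re, ofReal_im]
  ring

end Densities

section SocDenImBound

variable {d : ℕ}

@[fun_prop] lemma measurable_pdC (f : Pt d → ℂ) (j : ℕ) : Measurable (pdC d f j) := by
  unfold pdC
  split_ifs
  · exact measurable_fderiv_apply_const ℝ f _
  · exact measurable_const

lemma measurable_socDenIm {φ1 φ0 φm1 : Pt d → ℂ} (h1 : Measurable φ1) (h0 : Measurable φ0)
    (hm1 : Measurable φm1) : Measurable (socDenIm d φ1 φ0 φm1) := by
  unfold socDenIm L0op L1op
  fun_prop

lemma gradsq_nonneg (f : Pt d → ℂ) (x : Pt d) : 0 ≤ gradsq d f x :=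
  Finset.sum_nonneg fun _ _ => sq_nonneg _

lemma sq_norm_pdC_zero_add_sq_norm_pdC_one_le (hd : 2 ≤ d) (f : Pt d → ℂ) (x : Pt d) :
    ‖pdC d f 0 x‖ ^ 2 + ‖pdC d f 1 x‖ ^ 2 ≤ gradsq d f x := by
  have h := Finset.sum_le_sum_of_subset_of_nonneg
    (Finset.subset_univ ({⟨0, by omega⟩, ⟨1, by omega⟩} : Finset (Fin d)))
    (fun j _ _ => sq_nonneg ‖pdC d f j x‖)
  rwa [Finset.sum_pair (by simp)] at h

lemma norm_conj_mul_le (a b p q : ℂ) (hb : ‖b‖ ≤ ‖p‖ + ‖q‖) :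
    ‖(starRingEnd ℂ) a * b‖ ≤ ‖a‖ ^ 2 + (‖p‖ ^ 2 + ‖q‖ ^ 2) / 2 := by
  rw [norm_mul, RCLike.norm_conj]
  nlinarith [mul_le_mul_of_nonneg_left hb (norm_nonneg a), sq_nonneg (‖a‖ - ‖p‖),
    sq_nonneg (‖a‖ - ‖q‖)]

lemma norm_conj_mul_L0op_le (hd : 2 ≤ d) (φ f : Pt d → ℂ) (x : Pt d) :
    ‖(starRingEnd ℂ) (φ x) * L0op d f x‖ ≤ ‖φ x‖ ^ 2 + gradsq d f x / 2 := by
  have hL : ‖L0op d f x‖ ≤ ‖pdC d f 0 x‖ + ‖pdC d f 1 x‖ :=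
    (norm_add_le _ _).trans_eq (by rw [norm_mul, norm_I, one_mul])
  linarith [norm_conj_mul_le (φ x) _ _ _ hL, sq_norm_pdC_zero_add_sq_norm_pdC_one_le hd f x]

lemma norm_conj_mul_L1op_le (hd : 2 ≤ d) (φ f : Pt d → ℂ) (x : Pt d) :
    ‖(starRingEnd ℂ) (φ x) * L1op d f x‖ ≤ ‖φ x‖ ^ 2 + gradsq d f x / 2 := by
  have hL : ‖L1op d f x‖ ≤ ‖pdC d f 0 x‖ + ‖pdC d f 1 x‖ :=
    (norm_sub_le _ _).trans_eq (by rw [norm_mul, norm_I, one_mul])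
  linarith [norm_conj_mul_le (φ x) _ _ _ hL, sq_norm_pdC_zero_add_sq_norm_pdC_one_le hd f x]

lemma abs_socDenIm_le (hd : 2 ≤ d) (φ1 φ0 φm1 : Pt d → ℂ) (x : Pt d) :
    |socDenIm d φ1 φ0 φm1 x|
      ≤ 2 * rho d φ1 φ0 φm1 x + (gradsq d φ1 x + gradsq d φ0 x + gradsq d φm1 x) := by
  set a := (starRingEnd ℂ) (φ1 x) * L0op d φ0 x
  set b := (starRingEnd ℂ) (φ0 x) * L0op d φm1 x
  set c := (starRingEnd ℂ) (φ0 x) * L1op d φ1 x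
  set e := (starRingEnd ℂ) (φm1 x) * L1op d φ0 x
  have hsum : ‖a + b - c - e‖ ≤ ‖a‖ + ‖b‖ + ‖c‖ + ‖e‖ := by
    linarith [norm_sub_le (a + b - c) e, norm_sub_le (a + b) c, norm_add_le a b]
  calc |socDenIm d φ1 φ0 φm1 x| ≤ ‖a + b - c - e‖ := abs_im_le_norm _
    _ ≤ 2 * rho d φ1 φ0 φm1 x + (gradsq d φ1 x + gradsq d φ0 x + gradsq d φm1 x) := by
      rw [rho]
      linarith [norm_conj_mul_L0op_le hd φ1 φ0 x, norm_conj_mul_L0op_le hd φ0 φm1 x,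
        norm_conj_mul_L1op_le hd φ0 φ1 x, norm_conj_mul_L1op_le hd φm1 φ0 x,
        sq_nonneg ‖φ1 x‖, sq_nonneg ‖φm1 x‖, gradsq_nonneg φ1 x, gradsq_nonneg φm1 x]

lemma integrable_socDenIm (hd : 2 ≤ d) {φ1 φ0 φm1 : Pt d → ℂ} (h1 : Measurable φ1)
    (h0 : Measurable φ0) (hm1 : Measurable φm1) (hρ : Integrable (rho d φ1 φ0 φm1))
    (hG : Integrable fun x => gradsq d φ1 x + gradsq d φ0 x + gradsq d φm1 x) :
    Integrable (socDenIm d φ1 φ0 φm1) :=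
  ((hρ.const_mul 2).add hG).mono' (measurable_socDenIm h1 h0 hm1).aestronglyMeasurable
    (ae_of_all _ fun x => (Real.norm_eq_abs _).trans_le (abs_socDenIm_le hd φ1 φ0 φm1 x))

end SocDenImBound

section RotatedState

variable {d : ℕ}

lemma integrable_comp_RotPt_iff (hd : 2 ≤ d) (θ : ℝ) {g : Pt d → ℝ} :
    Integrable (g ∘ RotPt d θ) ↔ Integrable g :=
  integrable_comp (rotLIE hd θ) g

lemma integral_comp_RotPt (hd : 2 ≤ d) (θ : ℝ) (g : Pt d → ℝ) :
    ∫ x, (g ∘ RotPt d θ) x = ∫ x, g x :=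
  integral_comp (rotLIE hd θ) g

variable (φ1 φ0 φm1 : Pt d → ℂ)

lemma gradsq_sum_comp_RotPt (hd : 2 ≤ d) (θ : ℝ) :
    (fun x => gradsq d (φ1 ∘ RotPt d θ) x + gradsq d (φ0 ∘ RotPt d θ) x
        + gradsq d (φm1 ∘ RotPt d θ) x)
      = (fun x => gradsq d φ1 x + gradsq d φ0 x + gradsq d φm1 x) ∘ RotPt d θ := by
  ext x
  simp only [gradsq_comp_RotPt hd, Function.comp_apply]

lemma rotDen_sum_comp_RotPt (hd : 2 ≤ d) (θ : ℝ) :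
    (fun x => rotDen d (φ1 ∘ RotPt d θ) x + rotDen d (φ0 ∘ RotPt d θ) x
        + rotDen d (φm1 ∘ RotPt d θ) x)
      = (fun x => rotDen d φ1 x + rotDen d φ0 x + rotDen d φm1 x) ∘ RotPt d θ := by
  ext x
  simp only [rotDen_comp_RotPt hd, Function.comp_apply]

lemma potDen_comp_RotPt (hd : 2 ≤ d) {V : Pt d → ℝ} (hV : ∀ x y : Pt d, ‖x‖ = ‖y‖ → V x = V y)
    (θ : ℝ) :
    (fun x => V x * rho d (φ1 ∘ RotPt d θ) (φ0 ∘ RotPt d θ) (φm1 ∘ RotPt d θ) x)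
      = (fun x => V x * rho d φ1 φ0 φm1 x) ∘ RotPt d θ := by
  ext x
  simp only [Function.comp_apply, hV (RotPt d θ x) x (norm_RotPt hd θ x)]
  rfl

lemma socDen_comp_RotPt_eq (hd : 2 ≤ d) (θ : ℝ) :
    socDen d (φ1 ∘ RotPt d θ) (φ0 ∘ RotPt d θ) (φm1 ∘ RotPt d θ)
      = fun x => Real.cos θ * (socDen d φ1 φ0 φm1 ∘ RotPt d θ) x
        - Real.sin θ * (socDenIm d φ1 φ0 φm1 ∘ RotPt d θ) x :=
  funext (socDen_comp_RotPt hd θ φ1 φ0 φm1)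

variable {φ1 φ0 φm1}

lemma InM.comp_RotPt (hd : 2 ≤ d) {V : Pt d → ℝ} (hV : ∀ x y : Pt d, ‖x‖ = ‖y‖ → V x = V y)
    (θ : ℝ) (hM : InM d V φ1 φ0 φm1) :
    InM d V (φ1 ∘ RotPt d θ) (φ0 ∘ RotPt d θ) (φm1 ∘ RotPt d θ) := by
  obtain ⟨h1, h0, hm1, hρ, hG, hVρ, hρ2, hF, hrot, hsoc, hmass⟩ := hM
  have hR : Differentiable ℝ (RotPt d θ) := by
    rw [← coe_rotLIE hd θ]
    exact (rotLIE hd θ).toContinuousLinearEquiv.differentiable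
  have hIm := integrable_socDenIm hd h1.continuous.measurable h0.continuous.measurable
    hm1.continuous.measurable hρ hG
  refine ⟨h1.comp hR, h0.comp hR, hm1.comp hR, (integrable_comp_RotPt_iff hd θ).2 hρ, ?_, ?_,
    (integrable_comp_RotPt_iff hd θ).2 hρ2, (integrable_comp_RotPt_iff hd θ).2 hF, ?_, ?_, ?_⟩
  · rw [gradsq_sum_comp_RotPt φ1 φ0 φm1 hd θ]
    exact (integrable_comp_RotPt_iff hd θ).2 hG
  · rw [potDen_comp_RotPt φ1 φ0 φm1 hd hV θ]
    exact (integrable_comp_RotPt_iff hd θ).2 hVρ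
  · rw [rotDen_sum_comp_RotPt φ1 φ0 φm1 hd θ]
    exact (integrable_comp_RotPt_iff hd θ).2 hrot
  · rw [socDen_comp_RotPt_eq φ1 φ0 φm1 hd θ]
    exact (((integrable_comp_RotPt_iff hd θ).2 hsoc).const_mul _).sub
      (((integrable_comp_RotPt_iff hd θ).2 hIm).const_mul _)
  · exact (integral_comp_RotPt hd θ (rho d φ1 φ0 φm1)).trans hmass

lemma Ekin_comp_RotPt (hd : 2 ≤ d) (θ : ℝ) :
    Ekin d (φ1 ∘ RotPt d θ) (φ0 ∘ RotPt d θ) (φm1 ∘ RotPt d θ) = Ekin d φ1 φ0 φm1 := by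
  rw [Ekin, Ekin, gradsq_sum_comp_RotPt φ1 φ0 φm1 hd θ, integral_comp_RotPt hd θ]

lemma Epot_comp_RotPt (hd : 2 ≤ d) {V : Pt d → ℝ} (hV : ∀ x y : Pt d, ‖x‖ = ‖y‖ → V x = V y)
    (θ : ℝ) :
    Epot d V (φ1 ∘ RotPt d θ) (φ0 ∘ RotPt d θ) (φm1 ∘ RotPt d θ) = Epot d V φ1 φ0 φm1 := by
  rw [Epot, Epot, potDen_comp_RotPt φ1 φ0 φm1 hd hV θ, integral_comp_RotPt hd θ]

lemma Espin_comp_RotPt (hd : 2 ≤ d) (c0 c1 θ : ℝ) :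
    Espin d c0 c1 (φ1 ∘ RotPt d θ) (φ0 ∘ RotPt d θ) (φm1 ∘ RotPt d θ)
      = Espin d c0 c1 φ1 φ0 φm1 :=
  integral_comp_RotPt hd θ fun x => c0 / 2 * rho d φ1 φ0 φm1 x ^ 2 + c1 / 2 * Fsq d φ1 φ0 φm1 x

lemma Erot_comp_RotPt (hd : 2 ≤ d) (Ω θ : ℝ) :
    Erot d Ω (φ1 ∘ RotPt d θ) (φ0 ∘ RotPt d θ) (φm1 ∘ RotPt d θ) = Erot d Ω φ1 φ0 φm1 := by
  rw [Erot, Erot, rotDen_sum_comp_RotPt φ1 φ0 φm1 hd θ, integral_comp_RotPt hd θ]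

lemma Esoc_comp_RotPt (hd : 2 ≤ d) (γ θ : ℝ) (hsoc : Integrable (socDen d φ1 φ0 φm1))
    (hIm : Integrable (socDenIm d φ1 φ0 φm1)) :
    Esoc d γ (φ1 ∘ RotPt d θ) (φ0 ∘ RotPt d θ) (φm1 ∘ RotPt d θ)
      = Real.cos θ * Esoc d γ φ1 φ0 φm1
        + Real.sin θ * (γ * ∫ x, socDenIm d φ1 φ0 φm1 x) := by
  rw [Esoc, Esoc, socDen_comp_RotPt_eq φ1 φ0 φm1 hd θ,
    integral_sub (((integrable_comp_RotPt_iff hd θ).2 hsoc).const_mul _)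
      (((integrable_comp_RotPt_iff hd θ).2 hIm).const_mul _),
    integral_const_mul, integral_const_mul, integral_comp_RotPt hd θ,
    integral_comp_RotPt hd θ]
  ring

lemma Etot_comp_RotPt (hd : 2 ≤ d) {V : Pt d → ℝ} (hV : ∀ x y : Pt d, ‖x‖ = ‖y‖ → V x = V y)
    (c0 c1 Ω γ θ : ℝ) (hM : InM d V φ1 φ0 φm1) :
    Etot d V c0 c1 Ω γ (φ1 ∘ RotPt d θ) (φ0 ∘ RotPt d θ) (φm1 ∘ RotPt d θ)
      = Etot d V c0 c1 Ω γ φ1 φ0 φm1 + (Real.cos θ - 1) * Esoc d γ φ1 φ0 φm1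
        + Real.sin θ * (γ * ∫ x, socDenIm d φ1 φ0 φm1 x) := by
  obtain ⟨h1, h0, hm1, hρ, hG, -, -, -, -, hsoc, -⟩ := hM
  have hIm := integrable_socDenIm hd h1.continuous.measurable h0.continuous.measurable
    hm1.continuous.measurable hρ hG
  rw [Etot, Etot, Ekin_comp_RotPt hd, Epot_comp_RotPt hd hV, Espin_comp_RotPt hd,
    Erot_comp_RotPt hd, Esoc_comp_RotPt hd γ θ hsoc hIm]
  ring

end RotatedState

lemma eq_zero_of_forall_cos_sub_one_mul_add_sin_mul_nonneg {E T : ℝ}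
    (h : ∀ θ, 0 ≤ (Real.cos θ - 1) * E + Real.sin θ * T) : T = 0 := by
  have hmin : IsLocalMin (fun θ => (Real.cos θ - 1) * E + Real.sin θ * T) 0 :=
    Filter.Eventually.of_forall fun θ => by simpa using h θ
  have hder : HasDerivAt (fun θ => (Real.cos θ - 1) * E + Real.sin θ * T)
      (-Real.sin 0 * E + Real.cos 0 * T) 0 :=
    (((Real.hasDerivAt_cos 0).sub_const 1).mul_const E).add ((Real.hasDerivAt_sin 0).mul_const T)
  simpa using hmin.hasDerivAt_eq_zero hder

lemma Real.cos_lt_one_of_mem_Ioo {θ : ℝ} (hθ : θ ∈ Set.Ioo 0 (2 * Real.pi)) :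
    Real.cos θ < 1 :=
  (Real.cos_le_one θ).lt_of_ne fun h => hθ.1.ne'
    ((Real.cos_eq_one_iff_of_lt_of_lt (by linarith [Real.pi_pos, hθ.1]) hθ.2).1 h)

theorem stmt14_general (d : ℕ) (hd2 : 2 ≤ d)
    (c0 c1 Ω γ : ℝ) (V : Pt d → ℝ)
    (hrad : ∀ x y : Pt d, ‖x‖ = ‖y‖ → V x = V y)
    (g1 g0 gm1 : Pt d → ℂ) (hg : InM d V g1 g0 gm1)
    (hmin : ∀ ψ1 ψ0 ψm1 : Pt d → ℂ, InM d V ψ1 ψ0 ψm1 →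
      Etot d V c0 c1 Ω γ g1 g0 gm1 ≤ Etot d V c0 c1 Ω γ ψ1 ψ0 ψm1) :
    (Esoc d γ g1 g0 gm1 = 0 →
      ∀ θ ∈ Set.Ioo (0 : ℝ) (2 * Real.pi),
        InM d V (fun x => g1 (RotPt d θ x)) (fun x => g0 (RotPt d θ x))
          (fun x => gm1 (RotPt d θ x)) ∧
        ∀ ψ1 ψ0 ψm1 : Pt d → ℂ, InM d V ψ1 ψ0 ψm1 →
          Etot d V c0 c1 Ω γ (fun x => g1 (RotPt d θ x)) (fun x => g0 (RotPt d θ x))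
              (fun x => gm1 (RotPt d θ x))
            ≤ Etot d V c0 c1 Ω γ ψ1 ψ0 ψm1) ∧
    (Esoc d γ g1 g0 gm1 < 0 →
      ∀ θ ∈ Set.Ioo (0 : ℝ) (2 * Real.pi),
        Etot d V c0 c1 Ω γ g1 g0 gm1
          < Etot d V c0 c1 Ω γ (fun x => g1 (RotPt d θ x)) (fun x => g0 (RotPt d θ x))
              (fun x => gm1 (RotPt d θ x))) := by
  simp only [← Function.comp_def]
  have hrot := fun θ => Etot_comp_RotPt hd2 hrad c0 c1 Ω γ θ hg
  have hsin : γ * ∫ x, socDenIm d g1 g0 gm1 x = 0 :=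
    eq_zero_of_forall_cos_sub_one_mul_add_sin_mul_nonneg (E := Esoc d γ g1 g0 gm1) fun θ => by
      linarith [hmin _ _ _ (hg.comp_RotPt hd2 hrad θ), hrot θ]
  simp only [hsin, mul_zero, add_zero] at hrot
  refine ⟨fun hE θ _ => ⟨hg.comp_RotPt hd2 hrad θ, fun ψ1 ψ0 ψm1 hψ => ?_⟩, fun hE θ hθ => ?_⟩
  · rw [hrot θ, hE, mul_zero, add_zero]
    exact hmin ψ1 ψ0 ψm1 hψ
  · rw [hrot θ]
    nlinarith [Real.cos_lt_one_of_mem_Ioo hθ]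

/-- If `Φ_g` is a ground state in a radially symmetric trap with `E_soc(Φ_g) = 0`,
then every rotated function `Φ^θ`, `θ ∈ (0, 2π)`, is also a ground state; whereas if
`E_soc(Φ_g) < 0`, then `E(Φ^θ) > E(Φ_g)` for every `θ ∈ (0, 2π)`, so `Φ^θ` is not a
ground state. -/
theorem stmt14 (d : ℕ) (hd2 : 2 ≤ d) (hd3 : d ≤ 3)
    (c0 c1 Ω γ : ℝ) (V : Pt d → ℝ)
    (hrad : ∀ x y : Pt d, ‖x‖ = ‖y‖ → V x = V y)
    (g1 g0 gm1 : Pt d → ℂ) (hg : InM d V g1 g0 gm1)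
    (hmin : ∀ ψ1 ψ0 ψm1 : Pt d → ℂ, InM d V ψ1 ψ0 ψm1 →
      Etot d V c0 c1 Ω γ g1 g0 gm1 ≤ Etot d V c0 c1 Ω γ ψ1 ψ0 ψm1) :
    (Esoc d γ g1 g0 gm1 = 0 →
      ∀ θ ∈ Set.Ioo (0 : ℝ) (2 * Real.pi),
        InM d V (fun x => g1 (RotPt d θ x)) (fun x => g0 (RotPt d θ x))
          (fun x => gm1 (RotPt d θ x)) ∧
        ∀ ψ1 ψ0 ψm1 : Pt d → ℂ, InM d V ψ1 ψ0 ψm1 →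
          Etot d V c0 c1 Ω γ (fun x => g1 (RotPt d θ x)) (fun x => g0 (RotPt d θ x))
              (fun x => gm1 (RotPt d θ x))
            ≤ Etot d V c0 c1 Ω γ ψ1 ψ0 ψm1) ∧
    (Esoc d γ g1 g0 gm1 < 0 →
      ∀ θ ∈ Set.Ioo (0 : ℝ) (2 * Real.pi),
        Etot d V c0 c1 Ω γ g1 g0 gm1
          < Etot d V c0 c1 Ω γ (fun x => g1 (RotPt d θ x)) (fun x => g0 (RotPt d θ x))
              (fun x => gm1 (RotPt d θ x))) :=
  stmt14_general d hd2 c0 c1 Ω γ V hrad g1 g0 gm1 hg hmin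

end
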